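/- Let n ≥ 2 and let A be the n-by-n complex matrix with entries A(j, j+1) = w_j for 1 ≤ j ≤ n−1 and A(n, 1) = w_n, where w_1, …, w_n are all nonzero, and all other entries equal to 0. Then d(A) = ⌊n/2⌋. -/

import Mathlib

open Matrix Polynomial

noncomputable def zdi {m : Type*} [Fintype m] (A : Matrix m m ℂ) : ℕ :=
  sSup {k : ℕ | ∃ V : Matrix m (Fin k) ℂ, Vᴴ * V = 1 ∧ Vᴴ * A * V = 0}

noncomputable def matRe {m : Type*} (A : Matrix m m ℂ) : Matrix m m ℂ :=
  (2⁻¹ : ℂ) • (A + Aᴴ)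

noncomputable def iNonneg {m : Type*} [Fintype m] [DecidableEq m] (M : Matrix m m ℂ) : ℕ :=
  if hM : M.IsHermitian then (Finset.univ.filter fun i => 0 ≤ hM.eigenvalues i).card else 0

def numRange {m : Type*} [Fintype m] (A : Matrix m m ℂ) : Set ℂ :=
  {z | ∃ x : m → ℂ, star x ⬝ᵥ x = 1 ∧ star x ⬝ᵥ A.mulVec x = z}

noncomputable def arg2pi (z : ℂ) : ℝ :=
  if 0 ≤ Complex.arg z then Complex.arg z else Complex.arg z + 2 * Real.pi

def UnitSim {m : Type*} [Fintype m] [DecidableEq m] (A B : Matrix m m ℂ) : Prop :=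
  ∃ U ∈ Matrix.unitaryGroup m ℂ, Uᴴ * A * U = B

def UnitSimG {m l : Type*} [Fintype m] [DecidableEq m] [Fintype l] [DecidableEq l]
    (A : Matrix m m ℂ) (B : Matrix l l ℂ) : Prop :=
  ∃ e : m ≃ l, UnitSim (Matrix.reindex e e A) B

def superMat (n : ℕ) (w : ℕ → ℂ) : Matrix (Fin n) (Fin n) ℂ :=
  Matrix.of fun i j => if (j : ℕ) = (i : ℕ) + 1 then w (i : ℕ) else 0

def cycMat (n : ℕ) (w : ℕ → ℂ) : Matrix (Fin n) (Fin n) ℂ :=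
  Matrix.of fun i j => if (j : ℕ) = ((i : ℕ) + 1) % n then w (i : ℕ) else 0

/-!
If `V` is an isometry with `Vᴴ A V = 0`, the ranges of `V` and `A V` are orthogonal; when `A` is
invertible both have dimension `k`, so `2k ≤ n`. The weighted cyclic shift is a diagonal matrix
with nonzero entries times a permutation matrix, hence invertible. Conversely, it maps each even
coordinate vector `e₀, e₂, …` to a multiple of an odd one, so its compression to their span, of
dimension `⌊n/2⌋`, vanishes.
-/

section ZeroDilation

open scoped ComplexOrder

variable {m l : Type*} [Fintype m] [Fintype l] [DecidableEq l]

lemma rank_eq_card_of_conjTranspose_mul_self_eq_one {V : Matrix m l ℂ} (hV : Vᴴ * V = 1) :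
    V.rank = Fintype.card l := by
  rw [← rank_conjTranspose_mul_self, hV, rank_one]

lemma zdi_set_bddAbove (A : Matrix m m ℂ) :
    BddAbove {k : ℕ | ∃ V : Matrix m (Fin k) ℂ, Vᴴ * V = 1 ∧ Vᴴ * A * V = 0} := by
  refine ⟨Fintype.card m, ?_⟩
  rintro k ⟨V, hV, -⟩
  simpa [rank_eq_card_of_conjTranspose_mul_self_eq_one hV] using V.rank_le_card_height

lemma le_zdi {A : Matrix m m ℂ} {k : ℕ} (V : Matrix m (Fin k) ℂ) (hV : Vᴴ * V = 1)
    (hAV : Vᴴ * A * V = 0) : k ≤ zdi A :=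
  le_csSup (zdi_set_bddAbove A) ⟨V, hV, hAV⟩

lemma exists_isometry_zdi (A : Matrix m m ℂ) :
    ∃ V : Matrix m (Fin (zdi A)) ℂ, Vᴴ * V = 1 ∧ Vᴴ * A * V = 0 := by
  refine Nat.sSup_mem ?_ (zdi_set_bddAbove A)
  exact ⟨0, (0 : Matrix m (Fin 0) ℂ), Subsingleton.elim _ _, Subsingleton.elim _ _⟩

variable [DecidableEq m]

lemma two_mul_card_le_of_isUnit_det {A : Matrix m m ℂ} (hA : IsUnit A.det)
    {V : Matrix m l ℂ} (hV : Vᴴ * V = 1) (hAV : Vᴴ * A * V = 0) :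
    2 * Fintype.card l ≤ Fintype.card m := by
  have h := rank_add_rank_le_card_of_mul_eq_zero (A := Vᴴ) (B := A * V)
    (by rwa [← Matrix.mul_assoc])
  rwa [rank_conjTranspose, rank_mul_eq_right_of_isUnit_det _ _ hA,
    rank_eq_card_of_conjTranspose_mul_self_eq_one hV, ← two_mul] at h

lemma two_mul_zdi_le_of_isUnit_det {A : Matrix m m ℂ} (hA : IsUnit A.det) :
    2 * zdi A ≤ Fintype.card m := by
  obtain ⟨V, hV, hAV⟩ := exists_isometry_zdi A
  simpa using two_mul_card_le_of_isUnit_det hA hV hAV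

lemma le_zdi_of_submatrix_eq_zero {A : Matrix m m ℂ} {k : ℕ} {f : Fin k → m}
    (hf : Function.Injective f) (hA : A.submatrix f f = 0) : k ≤ zdi A := by
  refine le_zdi ((1 : Matrix m m ℂ).submatrix id f) ?_ ?_
  · rw [conjTranspose_submatrix, conjTranspose_one]
    exact (submatrix_mul_equiv _ _ f (.refl m) f).trans (by rw [mul_one, submatrix_one f hf])
  · rw [← hA]
    ext i j
    simp [mul_apply, one_apply]

end ZeroDilation

lemma cycMat_eq_diagonal_mul_permMatrix (n : ℕ) (w : ℕ → ℂ) :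
    cycMat n w = diagonal (fun i : Fin n => w i) * (finRotate n).permMatrix ℂ := by
  ext i j
  have := i.neZero
  simp [cycMat, diagonal_mul, Fin.ext_iff, Fin.val_add, eq_comm]

lemma isUnit_det_cycMat {n : ℕ} {w : ℕ → ℂ} (hw : ∀ j, j < n → w j ≠ 0) :
    IsUnit (cycMat n w).det := by
  rw [cycMat_eq_diagonal_mul_permMatrix, det_mul, det_diagonal, det_permutation,
    isUnit_iff_ne_zero]
  simp [Finset.prod_ne_zero_iff, hw]

lemma exists_injective_cycMat_submatrix_eq_zero (n : ℕ) (w : ℕ → ℂ) :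
    ∃ f : Fin (n / 2) → Fin n, Function.Injective f ∧ (cycMat n w).submatrix f f = 0 := by
  refine ⟨fun a => ⟨2 * a, by omega⟩, fun a b h => Fin.ext (by simpa using h), ?_⟩
  ext a b
  have : (2 * (a : ℕ) + 1) % n = 2 * a + 1 := Nat.mod_eq_of_lt (by omega)
  simp only [submatrix_apply, cycMat, of_apply, this, Matrix.zero_apply]
  exact if_neg (by omega)

theorem zdi_cycMat_general {n : ℕ} (w : ℕ → ℂ) (hw : ∀ j, j < n → w j ≠ 0) :
    zdi (cycMat n w) = n / 2 := by
  obtain ⟨f, hf, hzero⟩ := exists_injective_cycMat_submatrix_eq_zero n w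
  have hupper := two_mul_zdi_le_of_isUnit_det (isUnit_det_cycMat hw)
  rw [Fintype.card_fin] at hupper
  exact le_antisymm (by omega) (le_zdi_of_submatrix_eq_zero hf hzero)

/-- Lemma 4.4, first part. -/
theorem zdi_cycMat {n : ℕ} (hn : 2 ≤ n) (w : ℕ → ℂ) (hw : ∀ j, j < n → w j ≠ 0) :
    zdi (cycMat n w) = n / 2 :=
  zdi_cycMat_general w hw
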